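/- arXiv:2306.06428 — 6 statements merged into one kernel-verified Lean document; each statement's English description precedes it below -/
import Mathlib

section
/- Let g be a Leibniz algebra over a field of characteristic 0 and let N be a Nijenhuis operator on g. Define the deformed bracket [x,y]_* := [N(x),y] + [x,N(y)] − N([x,y]) for all x,y ∈ g. Then (g,[·,·]_*) is a Leibniz algebra, i.e., [x,[y,z]_*]_* = [[x,y]_*,z]_* + [y,[x,z]_*]_* for all x,y,z ∈ g. -/
/-- The deformed bracket `[x,y]_* = [N x, y] + [x, N y] - N [x, y]` induced by a
linear operator `N` on a Leibniz algebra `(g, br)`. -/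
def starBracket {K : Type*} [Field K] {g : Type*} [AddCommGroup g] [Module K g]
    (br : g →ₗ[K] g →ₗ[K] g) (N : g →ₗ[K] g) (x y : g) : g :=
  br (N x) y + br x (N y) - N (br x y)

/-- If `N` is a Nijenhuis operator on a Leibniz algebra `(g, br)` over a field of
characteristic 0, then the deformed bracket `[·,·]_*` makes `g` a Leibniz algebra. -/
theorem starBracket_leibniz {K : Type*} [Field K] [CharZero K]
    {g : Type*} [AddCommGroup g] [Module K g]
    (br : g →ₗ[K] g →ₗ[K] g)
    (leibniz : ∀ x y z : g, br x (br y z) = br (br x y) z + br y (br x z))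
    (N : g →ₗ[K] g)
    (nijenhuis : ∀ x y : g,
      br (N x) (N y) = N (br (N x) y + br x (N y) - N (br x y))) :
    ∀ x y z : g,
      starBracket br N x (starBracket br N y z) =
        starBracket br N (starBracket br N x y) z +
          starBracket br N y (starBracket br N x z) := by
  intro x y z
  -- expanded Leibniz instances
  have h1 : N (N (br x (br y z))) = N (N (br (br x y) z)) + N (N (br y (br x z))) := by
    rw [leibniz x y z, map_add, map_add]
  have h2 : N (br x (br y (N z))) = N (br (br x y) (N z)) + N (br y (br x (N z))) := by
    rw [leibniz x y (N z), map_add]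
  have h3 : N (br x (br (N y) z)) = N (br (br x (N y)) z) + N (br (N y) (br x z)) := by
    rw [leibniz x (N y) z, map_add]
  have h4 : br x (br (N y) (N z)) = br (br x (N y)) (N z) + br (N y) (br x (N z)) :=
    leibniz x (N y) (N z)
  have h5 : N (br (N x) (br y z)) = N (br (br (N x) y) z) + N (br y (br (N x) z)) := by
    rw [leibniz (N x) y z, map_add]
  have h6 : br (N x) (br y (N z)) = br (br (N x) y) (N z) + br y (br (N x) (N z)) :=
    leibniz (N x) y (N z)
  have h7 : br (N x) (br (N y) z) = br (br (N x) (N y)) z + br (N y) (br (N x) z) :=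
    leibniz (N x) (N y) z
  -- expanded Nijenhuis instances
  have h8 : br (br (N x) (N y)) z =
      br (N (br (N x) y)) z + br (N (br x (N y))) z - br (N (N (br x y))) z := by
    rw [nijenhuis x y]
    simp only [map_add, map_sub, LinearMap.add_apply, LinearMap.sub_apply]
  have h9 : br y (br (N x) (N z)) =
      br y (N (br (N x) z)) + br y (N (br x (N z))) - br y (N (N (br x z))) := by
    rw [nijenhuis x z]
    simp only [map_add, map_sub]
  have h10 : br (N x) (N (br y z)) =
      N (br (N x) (br y z)) + N (br x (N (br y z))) - N (N (br x (br y z))) := by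
    rw [nijenhuis x (br y z), map_sub, map_add]
  have h11 : br x (br (N y) (N z)) =
      br x (N (br (N y) z)) + br x (N (br y (N z))) - br x (N (N (br y z))) := by
    rw [nijenhuis y z]
    simp only [map_add, map_sub]
  have h12 : br (N y) (N (br x z)) =
      N (br (N y) (br x z)) + N (br y (N (br x z))) - N (N (br y (br x z))) := by
    rw [nijenhuis y (br x z), map_sub, map_add]
  have h13 : br (N (br x y)) (N z) =
      N (br (N (br x y)) z) + N (br (br x y) (N z)) - N (N (br (br x y) z)) := by
    rw [nijenhuis (br x y) z, map_sub, map_add]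
  simp only [starBracket, map_add, map_sub, LinearMap.add_apply, LinearMap.sub_apply]
  linear_combination (norm := module)
    h1 - h2 - h3 + h4 - h5 + h6 + h7 + h8 + h9 - h10 - h11 + h12 + h13
end

section
/- Let g be a Leibniz algebra over a field of characteristic 0 and let N be a Nijenhuis operator on g. Define the deformed bracket [x,y]_* := [N(x),y] + [x,N(y)] − N([x,y]) for all x,y ∈ g. Then N is also a Nijenhuis operator on the Leibniz algebra (g,[·,·]_*), i.e., [N(x),N(y)]_* = N([N(x),y]_* + [x,N(y)]_* − N([x,y]_*)) for all x,y ∈ g. -/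
/-- If `N` is a Nijenhuis operator on a Leibniz algebra `(g, br)` over a field of
characteristic 0, then `N` is also a Nijenhuis operator with respect to the deformed
bracket `[·,·]_*`. -/
theorem nijenhuis_starBracket {K : Type*} [Field K] [CharZero K]
    {g : Type*} [AddCommGroup g] [Module K g]
    (br : g →ₗ[K] g →ₗ[K] g)
    (leibniz : ∀ x y z : g, br x (br y z) = br (br x y) z + br y (br x z))
    (N : g →ₗ[K] g)
    (nijenhuis : ∀ x y : g,
      br (N x) (N y) = N (br (N x) y + br x (N y) - N (br x y))) :
    ∀ x y : g,
      starBracket br N (N x) (N y) =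
        N (starBracket br N (N x) y + starBracket br N x (N y) -
            N (starBracket br N x y)) := by
  intro x y
  simp only [starBracket]
  rw [nijenhuis (N x) y, nijenhuis x (N y), nijenhuis x y]
  simp only [map_add, map_sub]
end

section
/- Let ℝ² have standard basis e₁, e₂ and let [·,·] be the bilinear bracket on ℝ² determined by [e₂,e₁] = e₁, [e₂,e₂] = e₁, and [e₁,e₁] = [e₁,e₂] = 0 (this makes (ℝ²,[·,·]) a Leibniz algebra). Let a,b,c,d ∈ ℝ and let N : ℝ² → ℝ² be the linear map with N(e₁) = a·e₁ + c·e₂ and N(e₂) = b·e₁ + d·e₂. Then N is a Nijenhuis operator on (ℝ²,[·,·]) if and only if c = 0 and (a = d or a = b + d). -/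
/-- The Leibniz bracket on `ℝ²` determined by `[e₂,e₁] = [e₂,e₂] = e₁` and
`[e₁,e₁] = [e₁,e₂] = 0`, where `e₁ = (1,0)` and `e₂ = (0,1)`:
`[x, y] = x₂ (y₁ + y₂) • e₁`. -/
def leibBr (x y : ℝ × ℝ) : ℝ × ℝ := (x.2 * (y.1 + y.2), 0)

/-- The linear map `ℝ² → ℝ²` with `N e₁ = a e₁ + c e₂` and `N e₂ = b e₁ + d e₂`. -/
def nMap (a b c d : ℝ) (x : ℝ × ℝ) : ℝ × ℝ := (a * x.1 + b * x.2, c * x.1 + d * x.2)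

/-- `N` (given by the matrix `[[a, b], [c, d]]` in the standard basis) is a Nijenhuis
operator on the Leibniz algebra `(ℝ², leibBr)` if and only if `c = 0` and either
`a = d` or `a = b + d`. -/
theorem nijenhuis_iff_R2 (a b c d : ℝ) :
    (∀ x y : ℝ × ℝ,
      leibBr (nMap a b c d x) (nMap a b c d y) =
        nMap a b c d (leibBr (nMap a b c d x) y + leibBr x (nMap a b c d y) -
          nMap a b c d (leibBr x y))) ↔
    (c = 0 ∧ (a = d ∨ a = b + d)) := by
  constructor
  · intro h
    have h1 := h (1, 0) (1, 0)
    have h2 := h (0, 1) (0, 1)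
    simp [leibBr, nMap, Prod.ext_iff] at h1 h2
    have hc : c = 0 := by nlinarith [h1.2]
    subst hc
    refine ⟨rfl, ?_⟩
    have key : (a - d) * (a - b - d) = 0 := by nlinarith [h2.1]
    rcases mul_eq_zero.mp key with h | h
    · left; linarith
    · right; linarith
  · rintro ⟨hc, hd⟩ x y
    subst hc
    rcases hd with h | h <;> subst h <;>
      simp only [leibBr, nMap, Prod.ext_iff, Prod.fst_add, Prod.snd_add, Prod.fst_sub,
        Prod.snd_sub] <;> constructor <;> ring
end

section
/- Consider an abelian extension of a Nijenhuis Leibniz algebra (g,[·,·],N) by (V,N_V): a Leibniz algebra (ĝ,[·,·]^) with a Nijenhuis operator N̂, a subspace V ⊆ ĝ with [u,v]^ = 0 for all u,v ∈ V and N̂(V) ⊆ V (write N_V for the restriction of N̂ to V), and a surjective linear map p : ĝ → g with kernel V satisfying p([a,b]^) = [p(a),p(b)] and p(N̂(a)) = N(p(a)) for all a,b ∈ ĝ. Let s : g → ĝ be a section, i.e., a linear map with p ∘ s = Id_g. Then for all x ∈ g and u ∈ V the elements [s(x),u]^ and [u,s(x)]^ lie in V, and the maps l̄(x,u) := [s(x),u]^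 and r̄(u,x) := [u,s(x)]^ together with N_V make (V,l̄,r̄,N_V) a representation of the Nijenhuis Leibniz algebra (g,N). -/
/-- Given an abelian extension `0 → V → ĝ → g → 0` of a Nijenhuis Leibniz algebra
`(g, br, N)` by `(V, N_V)` (here `V = W` is a submodule of `ĝ` on which the bracket
of `ĝ` vanishes and which is invariant under `N̂`), and a section `s` of `p`, the
maps `l̄(x,u) = [s x, u]^`, `r̄(u,x) = [u, s x]^` take values in `V` and, together
with `N_V = N̂|_V`, make `V` a representation of the Nijenhuis Leibniz algebra
`(g, N)`. -/
theorem section_induces_representation {K : Type*} [Field K] [CharZero K]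
    {g ghat : Type*} [AddCommGroup g] [Module K g] [AddCommGroup ghat]
    [Module K ghat]
    (br : g →ₗ[K] g →ₗ[K] g)
    (leibniz : ∀ x y z : g, br x (br y z) = br (br x y) z + br y (br x z))
    (N : g →ₗ[K] g)
    (nijenhuis : ∀ x y : g,
      br (N x) (N y) = N (br (N x) y + br x (N y) - N (br x y)))
    (brh : ghat →ₗ[K] ghat →ₗ[K] ghat)
    (leibnizh : ∀ a b c : ghat, brh a (brh b c) = brh (brh a b) c + brh b (brh a c))
    (Nh : ghat →ₗ[K] ghat)
    (nijenhuish : ∀ a b : ghat,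
      brh (Nh a) (Nh b) = Nh (brh (Nh a) b + brh a (Nh b) - Nh (brh a b)))
    (W : Submodule K ghat)
    (habelian : ∀ u ∈ W, ∀ v ∈ W, brh u v = 0)
    (hNW : ∀ u ∈ W, Nh u ∈ W)
    (p : ghat →ₗ[K] g) (hpsurj : Function.Surjective p)
    (hker : LinearMap.ker p = W)
    (hpbr : ∀ a b : ghat, p (brh a b) = br (p a) (p b))
    (hpN : ∀ a : ghat, p (Nh a) = N (p a))
    (s : g →ₗ[K] ghat) (hs : ∀ x : g, p (s x) = x) :
    (∀ (x : g), ∀ u ∈ W, brh (s x) u ∈ W ∧ brh u (s x) ∈ W) ∧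
    (∀ (x y : g), ∀ u ∈ W,
      brh (s x) (brh (s y) u) =
        brh (s (br x y)) u + brh (s y) (brh (s x) u)) ∧
    (∀ (x y : g), ∀ u ∈ W,
      brh (s x) (brh u (s y)) =
        brh (brh (s x) u) (s y) + brh u (s (br x y))) ∧
    (∀ (x y : g), ∀ u ∈ W,
      brh u (s (br x y)) =
        brh (brh u (s x)) (s y) + brh (s x) (brh u (s y))) ∧
    (∀ (x : g), ∀ u ∈ W,
      brh (s (N x)) (Nh u) =
        Nh (brh (s (N x)) u + brh (s x) (Nh u) - Nh (brh (s x) u))) ∧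
    (∀ (x : g), ∀ u ∈ W,
      brh (Nh u) (s (N x)) =
        Nh (brh (Nh u) (s x) + brh u (s (N x)) - Nh (brh u (s x)))) := by
  have hWker : ∀ u ∈ W, p u = 0 := fun u hu => by
    rw [← LinearMap.mem_ker, hker]; exact hu
  have hkerW : ∀ a : ghat, p a = 0 → a ∈ W := fun a ha => by
    rw [← hker, LinearMap.mem_ker]; exact ha
  have hbrW : ∀ a : ghat, ∀ u ∈ W, brh a u ∈ W := fun a u hu =>
    hkerW _ (by rw [hpbr, hWker u hu, map_zero])
  have hWbr : ∀ a : ghat, ∀ u ∈ W, brh u a ∈ W := fun a u hu =>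
    hkerW _ (by rw [hpbr, hWker u hu]; simp)
  have hleft : ∀ a b : ghat, p a = p b → ∀ u ∈ W, brh a u = brh b u := by
    intro a b hab u hu
    have hmem : a - b ∈ W := hkerW _ (by rw [map_sub, hab, sub_self])
    have h0 : brh (a - b) u = 0 := habelian _ hmem _ hu
    have : brh a u - brh b u = 0 := by
      simpa [map_sub, LinearMap.sub_apply] using h0
    exact sub_eq_zero.mp this
  have hright : ∀ a b : ghat, p a = p b → ∀ u ∈ W, brh u a = brh u b := by
    intro a b hab u hu
    have hmem : a - b ∈ W := hkerW _ (by rw [map_sub, hab, sub_self])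
    have h0 : brh u (a - b) = 0 := habelian _ hu _ hmem
    have : brh u a - brh u b = 0 := by simpa [map_sub] using h0
    exact sub_eq_zero.mp this
  have hsb : ∀ x y : g, p (brh (s x) (s y)) = p (s (br x y)) := by
    intro x y; rw [hpbr, hs, hs, hs]
  have hsN : ∀ x : g, p (Nh (s x)) = p (s (N x)) := by
    intro x; rw [hpN, hs, hs]
  refine ⟨fun x u hu => ⟨hbrW _ u hu, hWbr _ u hu⟩, ?_, ?_, ?_, ?_, ?_⟩
  · intro x y u hu
    rw [leibnizh (s x) (s y) u, hleft _ _ (hsb x y) u hu]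
  · intro x y u hu
    rw [leibnizh (s x) u (s y), hright _ _ (hsb x y) u hu]
  · intro x y u hu
    rw [← hright _ _ (hsb x y) u hu, leibnizh u (s x) (s y)]
  · intro x u hu
    have h1 : brh (s (N x)) (Nh u) = brh (Nh (s x)) (Nh u) :=
      hleft _ _ (by rw [hsN]) _ (hNW u hu)
    rw [h1, nijenhuish (s x) u, hleft _ _ (hsN x) u hu]
  · intro x u hu
    have h1 : brh (Nh u) (s (N x)) = brh (Nh u) (Nh (s x)) :=
      hright _ _ (by rw [hsN]) _ (hNW u hu)
    rw [h1, nijenhuish u (s x), hright _ _ (hsN x) u hu]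
end

section
/- Consider an abelian extension of a Nijenhuis Leibniz algebra (g,[·,·],N) by (V,N_V): a Leibniz algebra (ĝ,[·,·]^) with a Nijenhuis operator N̂, a subspace V ⊆ ĝ with [u,v]^ = 0 for all u,v ∈ V and N̂(V) ⊆ V (write N_V for the restriction of N̂ to V), and a surjective linear map p : ĝ → g with kernel V satisfying p([a,b]^) = [p(a),p(b)] and p(N̂(a)) = N(p(a)) for all a,b ∈ ĝ. For a section s : g → ĝ (p ∘ s = Id_g) define ψ_s(x,y) := [s(x),s(y)]^ − s([x,y]) and χ_s(x) := N̂(s(x)) − s(N(x)); both take values in V. If s₁ and s₂ are two sections and γ := s₁ − s₂ (a linear map g → V), then for all x,y ∈ g: ψ_{s₁}(x,y) − ψ_{s₂}(x,y) = [s₂(x),γ(y)]^ + [γ(x),s₂(y)]^ − γ([x,y]) and χ_{s₁}(x) − χ_{s₂}(x) = N_V(γ(x)) − γ(N(x)); hence the pair (ψ_s,χ_s) changes by the Nijenhuis Leibniz coboundary d¹(γ,0) = (δ¹(γ), −φ¹(γ)), so its cohomology class is independent of the choice of section. -/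
/-- In an abelian extension `0 → V → ĝ → g → 0` of a Nijenhuis Leibniz algebra
`(g, br, N)` by `(V, N_V)`, the 2-cochain `(ψ_s, χ_s)` attached to a section `s`,
`ψ_s(x,y) = [s x, s y]^ - s([x,y])` and `χ_s(x) = N̂(s x) - s(N x)`, takes values in
`V`, and for two sections `s₁, s₂` with difference `γ = s₁ - s₂` one has
`ψ_{s₁} - ψ_{s₂} = δ¹(γ)` and `χ_{s₁} - χ_{s₂} = -φ¹(γ)`, i.e. the pair changes by
the coboundary `d¹(γ, 0)`; hence its cohomology class does not depend on the
section. -/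
theorem extension_cocycle_independent_of_section {K : Type*} [Field K] [CharZero K]
    {g ghat : Type*} [AddCommGroup g] [Module K g] [AddCommGroup ghat]
    [Module K ghat]
    (br : g →ₗ[K] g →ₗ[K] g)
    (leibniz : ∀ x y z : g, br x (br y z) = br (br x y) z + br y (br x z))
    (N : g →ₗ[K] g)
    (nijenhuis : ∀ x y : g,
      br (N x) (N y) = N (br (N x) y + br x (N y) - N (br x y)))
    (brh : ghat →ₗ[K] ghat →ₗ[K] ghat)
    (leibnizh : ∀ a b c : ghat, brh a (brh b c) = brh (brh a b) c + brh b (brh a c))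
    (Nh : ghat →ₗ[K] ghat)
    (nijenhuish : ∀ a b : ghat,
      brh (Nh a) (Nh b) = Nh (brh (Nh a) b + brh a (Nh b) - Nh (brh a b)))
    (W : Submodule K ghat)
    (habelian : ∀ u ∈ W, ∀ v ∈ W, brh u v = 0)
    (hNW : ∀ u ∈ W, Nh u ∈ W)
    (p : ghat →ₗ[K] g) (hpsurj : Function.Surjective p)
    (hker : LinearMap.ker p = W)
    (hpbr : ∀ a b : ghat, p (brh a b) = br (p a) (p b))
    (hpN : ∀ a : ghat, p (Nh a) = N (p a))
    (s₁ s₂ : g →ₗ[K] ghat) (hs₁ : ∀ x : g, p (s₁ x) = x)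
    (hs₂ : ∀ x : g, p (s₂ x) = x) :
    (∀ x y : g, brh (s₁ x) (s₁ y) - s₁ (br x y) ∈ W ∧
      brh (s₂ x) (s₂ y) - s₂ (br x y) ∈ W) ∧
    (∀ x : g, Nh (s₁ x) - s₁ (N x) ∈ W ∧ Nh (s₂ x) - s₂ (N x) ∈ W) ∧
    (∀ x y : g,
      (brh (s₁ x) (s₁ y) - s₁ (br x y)) - (brh (s₂ x) (s₂ y) - s₂ (br x y)) =
        brh (s₂ x) (s₁ y - s₂ y) + brh (s₁ x - s₂ x) (s₂ y) -
          (s₁ (br x y) - s₂ (br x y))) ∧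
    (∀ x : g,
      (Nh (s₁ x) - s₁ (N x)) - (Nh (s₂ x) - s₂ (N x)) =
        Nh (s₁ x - s₂ x) - (s₁ (N x) - s₂ (N x))) := by

  have mem : ∀ a : ghat, p a = 0 → a ∈ W := by
    intro a ha; rw [← hker]; exact ha
  have hγ : ∀ x : g, s₁ x - s₂ x ∈ W := by
    intro x; apply mem; simp [hs₁, hs₂]
  refine ⟨?_, ?_, ?_, ?_⟩
  · intro x y
    constructor <;> apply mem <;> simp [hpbr, hs₁, hs₂]
  · intro x
    constructor <;> apply mem <;> simp [hpN, hs₁, hs₂]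
  · intro x y
    have h0 : brh (s₁ x - s₂ x) (s₁ y - s₂ y) = 0 :=
      habelian _ (hγ x) _ (hγ y)
    have : brh (s₁ x) (s₁ y) = brh (s₂ x) (s₂ y) + brh (s₂ x) (s₁ y - s₂ y)
        + brh (s₁ x - s₂ x) (s₂ y) := by
      have e : s₁ x = s₂ x + (s₁ x - s₂ x) := by abel
      have e' : s₁ y = s₂ y + (s₁ y - s₂ y) := by abel
      rw [e, e']
      simp only [map_add, LinearMap.add_apply, h0]
      abel
    rw [this]; abel
  · intro x
    simp only [map_sub]; abel
end

section
/- Let (g,[·,·],N) be a Nijenhuis Leibniz algebra over a field of characteristic 0 and let (ĝ₁,[·,·]^₁,N̂₁,p₁) and (ĝ₂,[·,·]^₂,N̂₂,p₂) be two abelian extensions of (g,N) by the same (V,N_V) (so V ⊆ ĝᵢ, [u,v]^ᵢ = 0 for u,v ∈ V, N̂ᵢ(V) ⊆ V with restriction N_V, pᵢ : ĝᵢ → g surjective with kernel V, pᵢ([a,b]^ᵢ) = [pᵢ(a),pᵢ(b)] and pᵢ(N̂ᵢ(a)) = N(pᵢ(a))). Suppose ξ : ĝ₁ → ĝ₂ is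 an isomorphism of Nijenhuis Leibniz algebras (a linear bijection with ξ([a,b]^₁) = [ξ(a),ξ(b)]^₂ and ξ ∘ N̂₁ = N̂₂ ∘ ξ) satisfying ξ(u) = u for all u ∈ V and p₂ ∘ ξ = p₁. Let s₁ : g → ĝ₁ be a section of p₁ and set s₂ := ξ ∘ s₁. Then s₂ is a section of p₂, and the associated 2-cocycles coincide: for all x,y ∈ g, [s₂(x),s₂(y)]^₂ − s₂([x,y]) = [s₁(x),s₁(y)]^₁ − s₁([x,y]) and N̂₂(s₂(x)) − s₂(N(x)) = N̂₁(s₁(x)) − s₁(N(x)). -/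
/-- Two isomorphic abelian extensions of a Nijenhuis Leibniz algebra `(g, br, N)` by
`(V, N_V)` give rise to the same 2-cocycle: if `ξ : ĝ₁ → ĝ₂` is an isomorphism of
Nijenhuis Leibniz algebras with `ξ ∘ i₁ = i₂` (i.e. `ξ` is the identity on `V`) and
`p₂ ∘ ξ = p₁`, and `s₁` is a section of `p₁`, then `s₂ := ξ ∘ s₁` is a section of
`p₂`, and the 2-cocycles `(ψ_{s₁}, χ_{s₁})` and `(ψ_{s₂}, χ_{s₂})` coincide as
`V`-valued maps. -/
theorem isomorphic_extensions_same_cocycle {K : Type*} [Field K] [CharZero K]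
    {g ghat₁ ghat₂ V : Type*} [AddCommGroup g] [Module K g]
    [AddCommGroup ghat₁] [Module K ghat₁] [AddCommGroup ghat₂] [Module K ghat₂]
    [AddCommGroup V] [Module K V]
    (br : g →ₗ[K] g →ₗ[K] g)
    (leibniz : ∀ x y z : g, br x (br y z) = br (br x y) z + br y (br x z))
    (N : g →ₗ[K] g)
    (nijenhuis : ∀ x y : g,
      br (N x) (N y) = N (br (N x) y + br x (N y) - N (br x y)))
    (Nv : V →ₗ[K] V)
    -- the first abelian extension
    (brh₁ : ghat₁ →ₗ[K] ghat₁ →ₗ[K] ghat₁)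
    (leibnizh₁ : ∀ a b c : ghat₁,
      brh₁ a (brh₁ b c) = brh₁ (brh₁ a b) c + brh₁ b (brh₁ a c))
    (Nh₁ : ghat₁ →ₗ[K] ghat₁)
    (nijenhuish₁ : ∀ a b : ghat₁,
      brh₁ (Nh₁ a) (Nh₁ b) = Nh₁ (brh₁ (Nh₁ a) b + brh₁ a (Nh₁ b) - Nh₁ (brh₁ a b)))
    (i₁ : V →ₗ[K] ghat₁) (hi₁ : Function.Injective i₁)
    (habelian₁ : ∀ u v : V, brh₁ (i₁ u) (i₁ v) = 0)
    (hNV₁ : ∀ u : V, Nh₁ (i₁ u) = i₁ (Nv u))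
    (p₁ : ghat₁ →ₗ[K] g) (hpsurj₁ : Function.Surjective p₁)
    (hker₁ : LinearMap.ker p₁ = LinearMap.range i₁)
    (hpbr₁ : ∀ a b : ghat₁, p₁ (brh₁ a b) = br (p₁ a) (p₁ b))
    (hpN₁ : ∀ a : ghat₁, p₁ (Nh₁ a) = N (p₁ a))
    -- the second abelian extension
    (brh₂ : ghat₂ →ₗ[K] ghat₂ →ₗ[K] ghat₂)
    (leibnizh₂ : ∀ a b c : ghat₂,
      brh₂ a (brh₂ b c) = brh₂ (brh₂ a b) c + brh₂ b (brh₂ a c))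
    (Nh₂ : ghat₂ →ₗ[K] ghat₂)
    (nijenhuish₂ : ∀ a b : ghat₂,
      brh₂ (Nh₂ a) (Nh₂ b) = Nh₂ (brh₂ (Nh₂ a) b + brh₂ a (Nh₂ b) - Nh₂ (brh₂ a b)))
    (i₂ : V →ₗ[K] ghat₂) (hi₂ : Function.Injective i₂)
    (habelian₂ : ∀ u v : V, brh₂ (i₂ u) (i₂ v) = 0)
    (hNV₂ : ∀ u : V, Nh₂ (i₂ u) = i₂ (Nv u))
    (p₂ : ghat₂ →ₗ[K] g) (hpsurj₂ : Function.Surjective p₂)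
    (hker₂ : LinearMap.ker p₂ = LinearMap.range i₂)
    (hpbr₂ : ∀ a b : ghat₂, p₂ (brh₂ a b) = br (p₂ a) (p₂ b))
    (hpN₂ : ∀ a : ghat₂, p₂ (Nh₂ a) = N (p₂ a))
    -- the isomorphism of extensions
    (ξ : ghat₁ →ₗ[K] ghat₂) (hξbij : Function.Bijective ξ)
    (hξbr : ∀ a b : ghat₁, ξ (brh₁ a b) = brh₂ (ξ a) (ξ b))
    (hξN : ∀ a : ghat₁, ξ (Nh₁ a) = Nh₂ (ξ a))
    (hξV : ∀ u : V, ξ (i₁ u) = i₂ u)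
    (hξp : ∀ a : ghat₁, p₂ (ξ a) = p₁ a)
    -- a section of the first extension
    (s₁ : g →ₗ[K] ghat₁) (hs₁ : ∀ x : g, p₁ (s₁ x) = x) :
    (∀ x : g, p₂ (ξ (s₁ x)) = x) ∧
    (∀ x y : g, ∃ w : V,
      i₁ w = brh₁ (s₁ x) (s₁ y) - s₁ (br x y) ∧
      i₂ w = brh₂ (ξ (s₁ x)) (ξ (s₁ y)) - ξ (s₁ (br x y))) ∧
    (∀ x : g, ∃ w : V,
      i₁ w = Nh₁ (s₁ x) - s₁ (N x) ∧
      i₂ w = Nh₂ (ξ (s₁ x)) - ξ (s₁ (N x))) := by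
  refine ⟨fun x => by rw [hξp, hs₁], ?_, ?_⟩
  · intro x y
    have hk : brh₁ (s₁ x) (s₁ y) - s₁ (br x y) ∈ LinearMap.ker p₁ := by
      simp [LinearMap.mem_ker, hpbr₁, hs₁]
    rw [hker₁] at hk
    obtain ⟨w, hw⟩ := hk
    refine ⟨w, hw, ?_⟩
    rw [← hξV w, hw, map_sub]
    simp [hξbr]
  · intro x
    have hk : Nh₁ (s₁ x) - s₁ (N x) ∈ LinearMap.ker p₁ := by
      simp [LinearMap.mem_ker, hpN₁, hs₁]
    rw [hker₁] at hk
    obtain ⟨w, hw⟩ := hk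
    refine ⟨w, hw, ?_⟩
    rw [← hξV w, hw, map_sub]
    simp [hξN]
end
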